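/- Under the same projected gradient descent setup with step sizes $\eta_t = \eta_1/\sqrt{t}$, weights $w_t = t^\alpha$, convex functions $f_t: \Omega \to \mathbb{R}$ with subgradients $g_t \in \partial f_t(x_t)$, $\|g_t\| \leq G$, and diameter bound $D$: if $1/2 \leq \alpha$, then $\frac{1}{\sum_{t=1}^T t^\alpha} \sum_{t=1}^T t^\alpha (f_t(x_t) - f_t(x_*)) \leq \frac{(\alpha+1)D^2}{2\eta_1 \sqrt{T}} + \frac{(\alpha+1)\eta_1 G^2}{\sqrt{T}}$. -/

import Mathlib

open Finset
open scoped RealInnerProductSpace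

/-!
Projecting onto a convex set does not increase the distance to any point of the set, so one
step of projected subgradient descent gives
`2 η_t (f_t(x_t) - f_t(x_*)) ≤ ‖x_t - x_*‖² - ‖x_{t+1} - x_*‖² + η_t² G²`.
Multiplying by `t^α / (2 η_t) = t^(α+1/2) / (2 η₁)` and summing, the distance terms telescope
against the increasing weights to at most `T^(α+1/2) D² / (2 η₁)`, while the noise terms add up
to at most `η₁ G² T^(α+1/2) / 2`. Comparing with `∑ t^α ≥ T^(α+1) / (α+1)` gives the bound.
-/

section ProjectedSubgradient

variable {E : Type*} [NormedAddCommGroup E] [InnerProductSpace ℝ E]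

lemma norm_sub_sq_le_of_forall_norm_sub_le {K : Set E} (hK : Convex ℝ K) {u p y : E}
    (hp : p ∈ K) (hmin : ∀ z ∈ K, ‖p - u‖ ≤ ‖z - u‖) (hy : y ∈ K) :
    ‖p - y‖ ^ 2 ≤ ‖u - y‖ ^ 2 := by
  have : Nonempty K := ⟨⟨p, hp⟩⟩
  have hinf : ‖u - p‖ = ⨅ z : K, ‖u - z‖ :=
    le_antisymm (le_ciInf fun z => by simpa only [norm_sub_rev u] using hmin z z.2)
      (ciInf_le (f := fun z : K => ‖u - z‖) ⟨0, by rintro _ ⟨z, rfl⟩; positivity⟩ ⟨p, hp⟩)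
  have hobtuse : ⟪u - p, y - p⟫ ≤ 0 :=
    (norm_eq_iInf_iff_real_inner_le_zero hK hp).1 hinf y hy
  rw [norm_sub_rev p, show u - y = (u - p) - (y - p) by abel, norm_sub_sq_real (u - p)]
  nlinarith [sq_nonneg ‖u - p‖]

lemma two_mul_inner_le_of_projected_step {K : Set E} (hK : Convex ℝ K) {x g p y : E} {η : ℝ}
    (hp : p ∈ K) (hmin : ∀ z ∈ K, ‖p - (x - η • g)‖ ≤ ‖z - (x - η • g)‖) (hy : y ∈ K) :
    2 * η * ⟪g, x - y⟫ ≤ ‖x - y‖ ^ 2 - ‖p - y‖ ^ 2 + η ^ 2 * ‖g‖ ^ 2 := by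
  have hexpand : ‖x - η • g - y‖ ^ 2 = ‖x - y‖ ^ 2 - 2 * η * ⟪g, x - y⟫ + η ^ 2 * ‖g‖ ^ 2 := by
    rw [show x - η • g - y = (x - y) - η • g by abel, norm_sub_sq_real, real_inner_smul_right,
      norm_smul, mul_pow, Real.norm_eq_abs, sq_abs, real_inner_comm]
    ring
  linarith [norm_sub_sq_le_of_forall_norm_sub_le hK hp hmin hy]

lemma mul_sub_le_of_projected_subgradient_step {K : Set E} (hK : Convex ℝ K) {f : E → ℝ}
    {x g p y : E} {w η G : ℝ} (hw : 0 ≤ w) (hη : 0 < η) (hgG : ‖g‖ ≤ G)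
    (hsub : f x + ⟪g, y - x⟫ ≤ f y) (hp : p ∈ K)
    (hmin : ∀ z ∈ K, ‖p - (x - η • g)‖ ≤ ‖z - (x - η • g)‖) (hy : y ∈ K) :
    w * (f x - f y) ≤ w / (2 * η) * (‖x - y‖ ^ 2 - ‖p - y‖ ^ 2) + w * η * G ^ 2 / 2 := by
  have hgap : f x - f y ≤ ⟪g, x - y⟫ := by
    rw [← neg_sub x y, inner_neg_right] at hsub
    linarith
  have hstep := two_mul_inner_le_of_projected_step hK hp hmin hy
  have hgG2 : ‖g‖ ^ 2 ≤ G ^ 2 := pow_le_pow_left₀ (norm_nonneg g) hgG 2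
  calc w * (f x - f y) = w / (2 * η) * (2 * η * (f x - f y)) := by field_simp
    _ ≤ w / (2 * η) * (‖x - y‖ ^ 2 - ‖p - y‖ ^ 2 + η ^ 2 * G ^ 2) := by
        gcongr
        nlinarith
    _ = w / (2 * η) * (‖x - y‖ ^ 2 - ‖p - y‖ ^ 2) + w * η * G ^ 2 / 2 := by
        field_simp

lemma rpow_mul_sub_le_of_projected_subgradient_step {K : Set E} (hK : Convex ℝ K) {f : E → ℝ}
    {x g p y : E} {t α η₁ G : ℝ} (ht : 0 < t) (hη₁ : 0 < η₁) (hgG : ‖g‖ ≤ G)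
    (hsub : f x + ⟪g, y - x⟫ ≤ f y) (hp : p ∈ K)
    (hmin : ∀ z ∈ K, ‖p - (x - (η₁ / √t) • g)‖ ≤ ‖z - (x - (η₁ / √t) • g)‖) (hy : y ∈ K) :
    t ^ α * (f x - f y) ≤
      1 / (2 * η₁) * t ^ (α + 1 / 2) * (‖x - y‖ ^ 2 - ‖p - y‖ ^ 2) +
        η₁ * G ^ 2 / 2 * t ^ (α - 1 / 2) := by
  have hstep := mul_sub_le_of_projected_subgradient_step hK (Real.rpow_nonneg ht.le α)
    (by positivity) hgG hsub hp hmin hy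
  have hweight : t ^ α / (2 * (η₁ / √t)) = 1 / (2 * η₁) * t ^ (α + 1 / 2) := by
    rw [Real.rpow_add ht, ← Real.sqrt_eq_rpow]
    field_simp
  have hnoise : t ^ α * (η₁ / √t) * G ^ 2 / 2 = η₁ * G ^ 2 / 2 * t ^ (α - 1 / 2) := by
    rw [Real.rpow_sub ht, ← Real.sqrt_eq_rpow]
    ring
  rwa [hweight, hnoise] at hstep

end ProjectedSubgradient

section WeightedSums

-- Abel summation; keeping `- a (T + 1)` on the right is what lets the induction absorb the
-- increase `c T ≤ c (T + 1)` of the weights.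
lemma sum_Icc_mul_sub_succ_le_mul_sub {c a : ℕ → ℝ} {B : ℝ} (hc : Monotone c) (hc1 : 0 ≤ c 1)
    {T : ℕ} (hT : 1 ≤ T) (haB : ∀ t ∈ Icc 1 T, a t ≤ B) :
    ∑ t ∈ Icc 1 T, c t * (a t - a (t + 1)) ≤ c T * (B - a (T + 1)) := by
  induction T, hT using Nat.le_induction with
  | base =>
    simp only [Icc_self, sum_singleton]
    exact mul_le_mul_of_nonneg_left (by linarith [haB 1 (by simp)]) hc1
  | succ T hT ih =>
    rw [sum_Icc_succ_top (by omega)]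
    have hsum := ih fun t ht => haB t (Icc_subset_Icc_right (Nat.le_succ T) ht)
    have hnext : a (T + 1) ≤ B := haB (T + 1) (by simp)
    have hweight := mul_le_mul_of_nonneg_right (hc (Nat.le_succ T)) (sub_nonneg.2 hnext)
    linarith

lemma sum_Icc_mul_sub_succ_le_mul {c a : ℕ → ℝ} {B : ℝ} (hc : Monotone c) (hc1 : 0 ≤ c 1)
    {T : ℕ} (hT : 1 ≤ T) (haB : ∀ t ∈ Icc 1 T, a t ≤ B) (ha : 0 ≤ a (T + 1)) :
    ∑ t ∈ Icc 1 T, c t * (a t - a (t + 1)) ≤ c T * B :=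
  (sum_Icc_mul_sub_succ_le_mul_sub hc hc1 hT haB).trans
    (mul_le_mul_of_nonneg_left (by linarith) (hc1.trans (hc hT)))

lemma sum_Icc_rpow_le {β : ℝ} (hβ : 0 ≤ β) (T : ℕ) :
    ∑ t ∈ Icc 1 T, (t : ℝ) ^ β ≤ (T : ℝ) ^ (β + 1) :=
  calc ∑ t ∈ Icc 1 T, (t : ℝ) ^ β ≤ ∑ _t ∈ Icc 1 T, (T : ℝ) ^ β :=
        sum_le_sum fun t ht => Real.rpow_le_rpow (by positivity)
          (by exact_mod_cast (mem_Icc.1 ht).2) hβ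
    _ = (T : ℝ) ^ (β + 1) := by
        rw [sum_const, Nat.card_Icc, add_tsub_cancel_right, nsmul_eq_mul,
          Real.rpow_add_one' (Nat.cast_nonneg T) (by linarith), mul_comm]

lemma sum_Icc_rpow_ge {α : ℝ} (hα : 0 ≤ α) (T : ℕ) :
    (T : ℝ) ^ (α + 1) / (α + 1) ≤ ∑ t ∈ Icc 1 T, (t : ℝ) ^ α := by
  have hmono : MonotoneOn (fun s : ℝ => s ^ α) (Set.Icc 0 (0 + T)) := fun s hs _ _ hst =>
    Real.rpow_le_rpow hs.1 hst hα
  have hint := hmono.integral_le_sum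
  rw [zero_add, integral_rpow (Or.inl (by linarith)), Real.zero_rpow (by linarith),
    sub_zero] at hint
  rw [← Ico_add_one_right_eq_Icc, sum_Ico_eq_sum_range]
  simpa [add_comm] using hint

lemma sum_Icc_le_of_le_weighted_telescoping {r a : ℕ → ℝ} {A B R α : ℝ} (hA : 0 ≤ A)
    (hB : 0 ≤ B) (hα : 1 / 2 ≤ α) {T : ℕ} (hT : 1 ≤ T)
    (hr : ∀ t ∈ Icc 1 T,
      r t ≤ A * (t : ℝ) ^ (α + 1 / 2) * (a t - a (t + 1)) + B * (t : ℝ) ^ (α - 1 / 2))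
    (haR : ∀ t ∈ Icc 1 T, a t ≤ R) (ha : 0 ≤ a (T + 1)) :
    ∑ t ∈ Icc 1 T, r t ≤ (T : ℝ) ^ (α + 1 / 2) * (A * R + B) := by
  set c : ℕ → ℝ := fun t => A * (t : ℝ) ^ (α + 1 / 2)
  have hc : Monotone c := fun s t hst =>
    mul_le_mul_of_nonneg_left
      (Real.rpow_le_rpow (by positivity) (by exact_mod_cast hst) (by linarith)) hA
  calc ∑ t ∈ Icc 1 T, r t
      ≤ ∑ t ∈ Icc 1 T, (c t * (a t - a (t + 1)) + B * (t : ℝ) ^ (α - 1 / 2)) := sum_le_sum hr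
    _ = ∑ t ∈ Icc 1 T, c t * (a t - a (t + 1)) + B * ∑ t ∈ Icc 1 T, (t : ℝ) ^ (α - 1 / 2) := by
        rw [sum_add_distrib, mul_sum]
    _ ≤ c T * R + B * (T : ℝ) ^ (α - 1 / 2 + 1) := by
        gcongr
        · exact sum_Icc_mul_sub_succ_le_mul hc (by positivity) hT haR ha
        · exact sum_Icc_rpow_le (by linarith) T
    _ = (T : ℝ) ^ (α + 1 / 2) * (A * R + B) := by
        rw [show α - 1 / 2 + 1 = α + 1 / 2 by ring]
        ring

end WeightedSums

theorem stmt_10_general (d : ℕ) (Ω : Set (EuclideanSpace ℝ (Fin d)))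
    (hconv : Convex ℝ Ω)
    (D G η₁ α : ℝ) (hη₁ : 0 < η₁) (hα : 1 / 2 ≤ α)
    (hdiam : ∀ x ∈ Ω, ∀ y ∈ Ω, ‖x - y‖ ≤ D)
    (T : ℕ) (hT : 1 ≤ T)
    (x g : ℕ → EuclideanSpace ℝ (Fin d))
    (f : ℕ → EuclideanSpace ℝ (Fin d) → ℝ)
    (hsubgrad : ∀ t, 1 ≤ t → t ≤ T → ∀ y ∈ Ω,
      f t (x t) + (inner ℝ (g t) (y - x t) : ℝ) ≤ f t y)
    (η : ℕ → ℝ) (hη : ∀ t, 1 ≤ t → η t = η₁ / Real.sqrt t)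
    (hxΩ : ∀ t, 1 ≤ t → t ≤ T + 1 → x t ∈ Ω)
    (hgG : ∀ t, 1 ≤ t → t ≤ T → ‖g t‖ ≤ G)
    (hproj : ∀ t, 1 ≤ t → t ≤ T → ∀ y ∈ Ω,
      ‖x (t + 1) - (x t - η t • g t)‖ ≤ ‖y - (x t - η t • g t)‖)
    (xstar : EuclideanSpace ℝ (Fin d)) (hxstar : xstar ∈ Ω) :
    (1 / ∑ t ∈ Icc 1 T, (t : ℝ) ^ α) *
      ∑ t ∈ Icc 1 T, (t : ℝ) ^ α * (f t (x t) - f t xstar) ≤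
      (α + 1) * D ^ 2 / (2 * η₁ * Real.sqrt T) +
      (α + 1) * η₁ * G ^ 2 / Real.sqrt T := by
  have hT0 : (0 : ℝ) < T := by exact_mod_cast hT
  have hregret : ∑ t ∈ Icc 1 T, (t : ℝ) ^ α * (f t (x t) - f t xstar) ≤
      (T : ℝ) ^ (α + 1 / 2) * (1 / (2 * η₁) * D ^ 2 + η₁ * G ^ 2 / 2) := by
    refine sum_Icc_le_of_le_weighted_telescoping (a := fun t => ‖x t - xstar‖ ^ 2)
      (by positivity) (by positivity) hα hT (fun t ht => ?_) (fun t ht => ?_) (sq_nonneg _)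
    · obtain ⟨ht1, htT⟩ := mem_Icc.1 ht
      exact rpow_mul_sub_le_of_projected_subgradient_step hconv (Nat.cast_pos.2 ht1) hη₁
        (hgG t ht1 htT) (hsubgrad t ht1 htT xstar hxstar) (hxΩ (t + 1) (by omega) (by omega))
        (by simpa only [hη t ht1] using hproj t ht1 htT) hxstar
    · obtain ⟨ht1, htT⟩ := mem_Icc.1 ht
      exact pow_le_pow_left₀ (norm_nonneg _) (hdiam _ (hxΩ t ht1 (by omega)) _ hxstar) 2
  have hweights : (T : ℝ) ^ (α + 1 / 2) * √T / (α + 1) ≤ ∑ t ∈ Icc 1 T, (t : ℝ) ^ α :=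
    calc (T : ℝ) ^ (α + 1 / 2) * √T / (α + 1) = (T : ℝ) ^ (α + 1) / (α + 1) := by
          rw [Real.sqrt_eq_rpow, ← Real.rpow_add hT0]
          ring_nf
      _ ≤ _ := sum_Icc_rpow_ge (by linarith) T
  calc _ = (∑ t ∈ Icc 1 T, (t : ℝ) ^ α * (f t (x t) - f t xstar)) /
        ∑ t ∈ Icc 1 T, (t : ℝ) ^ α := one_div_mul_eq_div _ _
    _ ≤ (T : ℝ) ^ (α + 1 / 2) * (1 / (2 * η₁) * D ^ 2 + η₁ * G ^ 2 / 2) /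
        ((T : ℝ) ^ (α + 1 / 2) * √T / (α + 1)) :=
          div_le_div₀ (by positivity) hregret (by positivity) hweights
    _ = (α + 1) * D ^ 2 / (2 * η₁ * √T) + (α + 1) * η₁ * G ^ 2 / (2 * √T) := by
          field_simp
    _ ≤ _ := by
          gcongr
          linarith [Real.sqrt_nonneg (T : ℝ)]

theorem stmt_10 (d : ℕ) (Ω : Set (EuclideanSpace ℝ (Fin d)))
    (hclosed : IsClosed Ω) (hconv : Convex ℝ Ω)
    (D G η₁ α : ℝ) (hD : 0 ≤ D) (hG : 0 ≤ G) (hη₁ : 0 < η₁) (hα : 1 / 2 ≤ α)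
    (hdiam : ∀ x ∈ Ω, ∀ y ∈ Ω, ‖x - y‖ ≤ D)
    (T : ℕ) (hT : 1 ≤ T)
    (x g : ℕ → EuclideanSpace ℝ (Fin d))
    (f : ℕ → EuclideanSpace ℝ (Fin d) → ℝ)
    (hfconv : ∀ t, 1 ≤ t → t ≤ T → ConvexOn ℝ Ω (f t))
    (hsubgrad : ∀ t, 1 ≤ t → t ≤ T → ∀ y ∈ Ω,
      f t (x t) + (inner ℝ (g t) (y - x t) : ℝ) ≤ f t y)
    (η : ℕ → ℝ) (hη : ∀ t, 1 ≤ t → η t = η₁ / Real.sqrt t)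
    (hxΩ : ∀ t, 1 ≤ t → t ≤ T + 1 → x t ∈ Ω)
    (hgG : ∀ t, 1 ≤ t → t ≤ T → ‖g t‖ ≤ G)
    (hproj : ∀ t, 1 ≤ t → t ≤ T → ∀ y ∈ Ω,
      ‖x (t + 1) - (x t - η t • g t)‖ ≤ ‖y - (x t - η t • g t)‖)
    (xstar : EuclideanSpace ℝ (Fin d)) (hxstar : xstar ∈ Ω) :
    (1 / ∑ t ∈ Icc 1 T, (t : ℝ) ^ α) *
      ∑ t ∈ Icc 1 T, (t : ℝ) ^ α * (f t (x t) - f t xstar) ≤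
      (α + 1) * D ^ 2 / (2 * η₁ * Real.sqrt T) +
      (α + 1) * η₁ * G ^ 2 / Real.sqrt T :=
  stmt_10_general d Ω hconv D G η₁ α hη₁ hα hdiam T hT x g f hsubgrad η hη hxΩ hgG hproj xstar
    hxstar
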